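/- Let p : ℚ[k₁, g₂, g₃] → ℚ[k₁, g₂] be the ℚ-algebra homomorphism determined by k₁ ↦ k₁, g₂ ↦ g₂, g₃ ↦ 0, and let φ : ℚ[k₁, k₂, g₂, q] → ℚ[k₁, g₂] be the ℚ-algebra homomorphism determined by k₁ ↦ k₁, g₂ ↦ g₂, k₂ ↦ 2g₂ − k₁², q ↦ −g₂(k₁² − 4g₂). Let A := ℚ[k₁, g₂, g₃] ×_{ℚ[k₁,g₂]} ℚ[k₁, k₂, g₂, q] be the fiber product along p and φ. Then A is generated as a ℚ-algebra by the five elements (k₁, k₁), (g₂, g₂), (g₃, 0), (2g₂ − k₁², k₂), and (−g₂(k₁² − 4g₂), q). -/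

import Mathlib

open MvPolynomial

/-!
The map `σ : k₁ ↦ k₁, k₂ ↦ 2g₂ − k₁², g₂ ↦ g₂, q ↦ −g₂(k₁² − 4g₂)` lifts `φ` through `p`, and
`ker p = (g₃)`. Hence every `(f, g)` in the fiber product is `(σ g, g) + (g₃, 0) * (h, c)` with
`f − σ g = g₃ h`; the first summand is a polynomial in the generators through `g ↦ (σ g, g)`, and a
suitable `(h, c)` is a polynomial in `(k₁, k₁), (g₂, g₂), (g₃, 0)`.
-/

/-- `p : ℚ[k₁, g₂, g₃] → ℚ[k₁, g₂]`, the identity on `k₁, g₂` and `g₃ ↦ 0`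
(variables: `k₁ = X 0`, `g₂ = X 1`, `g₃ = X 2` in the source, `k₁ = X 0`, `g₂ = X 1` in
the target). -/
noncomputable def pMap : MvPolynomial (Fin 3) ℚ →ₐ[ℚ] MvPolynomial (Fin 2) ℚ :=
  aeval ![X 0, X 1, 0]

/-- `φ : ℚ[k₁, k₂, g₂, q] → ℚ[k₁, g₂]`, the identity on `k₁, g₂`, with
`k₂ ↦ 2g₂ − k₁²` and `q ↦ −g₂(k₁² − 4g₂)` (variables: `k₁ = X 0`, `k₂ = X 1`,
`g₂ = X 2`, `q = X 3` in the source). -/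
noncomputable def phiMap : MvPolynomial (Fin 4) ℚ →ₐ[ℚ] MvPolynomial (Fin 2) ℚ :=
  aeval ![X 0, 2 * X 1 - X 0 ^ 2, X 1, -(X 1) * (X 0 ^ 2 - 4 * X 1)]

/-- The fiber product `A = ℚ[k₁,g₂,g₃] ×_{ℚ[k₁,g₂]} ℚ[k₁,k₂,g₂,q]` along `p` and `φ`,
as a subalgebra of the product. -/
noncomputable def fibA : Subalgebra ℚ (MvPolynomial (Fin 3) ℚ × MvPolynomial (Fin 4) ℚ) :=
  AlgHom.equalizer (pMap.comp (AlgHom.fst ℚ _ _)) (phiMap.comp (AlgHom.snd ℚ _ _))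

section FiberProduct

variable {R A C D : Type*} [CommSemiring R] [Ring A] [Ring C] [Ring D]
  [Algebra R A] [Algebra R C] [Algebra R D]

theorem AlgHom.equalizer_fst_snd_le_of_lift (p : A →ₐ[R] D) (q : C →ₐ[R] D) (σ : C →ₐ[R] A)
    (hσ : ∀ c, p (σ c) = q c) (t : A) (ht : ∀ a, p a = 0 → t ∣ a) (S : Subalgebra R (A × C))
    (hσS : ∀ c, (σ c, c) ∈ S) (hfst : ∀ a, ∃ c, (a, c) ∈ S) (htS : (t, 0) ∈ S) :
    AlgHom.equalizer (p.comp (AlgHom.fst R A C)) (q.comp (AlgHom.snd R A C)) ≤ S := by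
  rintro ⟨a, c⟩ hac
  replace hac : p a = q c := hac
  obtain ⟨b, hb⟩ := ht (a - σ c) (by rw [map_sub, hσ, hac, sub_self])
  obtain ⟨c', hc'⟩ := hfst b
  have hdecomp : (a, c) = (σ c, c) + (t, 0) * (b, c') := by
    ext <;> simp [← hb]
  rw [hdecomp]
  exact add_mem (hσS c) (mul_mem htS hc')

end FiberProduct

theorem MvPolynomial.algHom_mem_adjoin {R B ι : Type*} [CommSemiring R] [CommSemiring B]
    [Algebra R B] (f : MvPolynomial ι R →ₐ[R] B) {s : Set B} (hs : ∀ i, f (X i) ∈ s)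
    (x : MvPolynomial ι R) : f x ∈ Algebra.adjoin R s := by
  have hrange : f x ∈ Algebra.adjoin R (Set.range (f ∘ X)) := by
    rw [Algebra.adjoin_range_eq_range_aeval, ← aeval_unique]
    exact ⟨x, rfl⟩
  exact Algebra.adjoin_mono (Set.range_subset_iff.mpr hs) hrange

theorem MvPolynomial.X_dvd_sub_aeval_update {R ι : Type*} [CommRing R] [DecidableEq ι]
    (i : ι) (f : MvPolynomial ι R) :
    X i ∣ f - aeval (Function.update (X : ι → MvPolynomial ι R) i 0) f := by
  set e := aeval (R := R) (Function.update (X : ι → MvPolynomial ι R) i 0)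
  induction f using MvPolynomial.induction_on with
  | C _ => simp
  | add f g hf hg =>
    rw [map_add, add_sub_add_comm]
    exact dvd_add hf hg
  | mul_X f j hf =>
    have hj : X i ∣ X j - e (X j) := by
      rcases eq_or_ne j i with rfl | hji <;> simp [e, *]
    have hsplit : f * X j - e (f * X j) = (f - e f) * X j + e f * (X j - e (X j)) := by
      rw [map_mul]; ring
    rw [hsplit]
    exact dvd_add (hf.mul_right _) (hj.mul_left _)

theorem X_two_dvd_of_pMap_eq_zero (f : MvPolynomial (Fin 3) ℚ) (hf : pMap f = 0) : X 2 ∣ f := by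
  have hfactor : aeval (Function.update (X : Fin 3 → MvPolynomial (Fin 3) ℚ) 2 0) =
      (aeval ![X 0, X 1]).comp pMap := by
    apply algHom_ext
    intro i
    fin_cases i <;> simp [pMap]
  simpa [hfactor, hf] using X_dvd_sub_aeval_update 2 f

noncomputable def liftPhi : MvPolynomial (Fin 4) ℚ →ₐ[ℚ] MvPolynomial (Fin 3) ℚ :=
  aeval ![X 0, 2 * X 1 - X 0 ^ 2, X 1, -(X 1) * (X 0 ^ 2 - 4 * X 1)]

noncomputable def liftP : MvPolynomial (Fin 3) ℚ →ₐ[ℚ] MvPolynomial (Fin 4) ℚ :=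
  aeval ![X 0, X 2, 0]

theorem pMap_liftPhi (g : MvPolynomial (Fin 4) ℚ) : pMap (liftPhi g) = phiMap g := by
  rw [← AlgHom.comp_apply]
  congr 1
  apply algHom_ext
  intro i
  fin_cases i <;> simp [pMap, phiMap, liftPhi, map_ofNat]

theorem fiber_product_generators :
    Algebra.adjoin ℚ
      ({(X 0, X 0), (X 1, X 2), (X 2, 0),
        ((2 * X 1 - X 0 ^ 2 : MvPolynomial (Fin 3) ℚ), (X 1 : MvPolynomial (Fin 4) ℚ)),
        (-(X 1) * (X 0 ^ 2 - 4 * X 1), X 3)} :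
        Set (MvPolynomial (Fin 3) ℚ × MvPolynomial (Fin 4) ℚ)) = fibA := by
  apply le_antisymm
  · rw [Algebra.adjoin_le_iff]
    intro x hx
    simp only [Set.mem_insert_iff, Set.mem_singleton_iff] at hx
    rcases hx with rfl | rfl | rfl | rfl | rfl <;>
      simp [fibA, pMap, phiMap, map_ofNat]
  · refine AlgHom.equalizer_fst_snd_le_of_lift pMap phiMap liftPhi pMap_liftPhi (X 2)
      X_two_dvd_of_pMap_eq_zero _ (fun c => ?_) (fun a => ⟨liftP a, ?_⟩) (Algebra.subset_adjoin ?_)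
    · refine algHom_mem_adjoin (liftPhi.prod (AlgHom.id ℚ _)) (fun i => ?_) c
      fin_cases i <;> simp [liftPhi]
    · refine algHom_mem_adjoin ((AlgHom.id ℚ _).prod liftP) (fun i => ?_) a
      fin_cases i <;> simp [liftP]
    · simp
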